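/- arXiv:2110.12132 — 2 statements merged into one kernel-verified Lean document; each statement's English description precedes it below -/
import Mathlib

section
/- (Kiefer–Wolfowitz equivalence theorem) Let π* be a design with M(π*) invertible. Then π* is D-optimal (maximizes det M(π) over all designs) if and only if π* is G-optimal (minimizes g(π) = max_{1≤i≤k} φ_iᵀ M(π)⁻¹ φ_i over all designs with invertible information matrix). -/
open Matrix BigOperators

/-- A design is a probability vector over the `k` candidate points. -/
def IsDesign {k : ℕ} (π : Fin k → ℝ) : Prop :=
  (∀ i, 0 ≤ π i) ∧ ∑ i, π i = 1

/-- The information matrix `M(π) = ∑ i, π i • φ i φ iᵀ` of a design. -/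
noncomputable def infoMatrix {d k : ℕ} (φ : Fin k → (Fin d → ℝ)) (π : Fin k → ℝ) :
    Matrix (Fin d) (Fin d) ℝ :=
  ∑ i, π i • vecMulVec (φ i) (φ i)


/-!
Write `q_j(π) = φ_jᵀ M(π)⁻¹ φ_j`. Since `∑ π_i q_i(π) = tr (M(π)⁻¹ M(π)) = d`, every design has
`g(π) ≥ d`. Moving a D-optimal design `π` towards the vertex `e_j` multiplies `det M` by
`(1-t)^(d-1) (1 - t + t q_j(π))` (matrix determinant lemma), and this factor is `≤ 1` for small
`t > 0` only if `q_j(π) ≤ d`; so D-optimal designs attain the minimal value `g = d`.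
Conversely, if `g(π*) ≤ d` (the value of a D-optimal design, which exists by compactness of the
simplex), then `tr (M(π*)⁻¹ M(π)) = ∑ π_i q_i(π*) ≤ d` for every design `π`, and applying
`λ ≤ exp (λ - 1)` to the eigenvalues of `M(π*)^(-1/2) M(π) M(π*)^(-1/2)` gives
`det M(π) ≤ det M(π*)`.
-/

open Set Filter Topology

theorem le_of_forall_one_sub_pow_mul_le {d : ℕ} {q : ℝ} (hq : 0 ≤ q)
    (h : ∀ t ∈ Ioo (0 : ℝ) 1, (1 - t) ^ d * (1 - t + t * q) ≤ 1 - t) : q ≤ d := by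
  have key : ∀ t ∈ Ioo (0 : ℝ) 1, q - d ≤ d * (q - 1) * t := by
    rintro t ⟨ht0, ht1⟩
    have bernoulli : 1 - d * t ≤ (1 - t) ^ d := by
      simpa [sub_eq_add_neg] using one_add_mul_le_pow (a := -t) (by linarith) d
    have := (mul_le_mul_of_nonneg_right bernoulli (by positivity : 0 ≤ 1 - t + t * q)).trans
      (h t ⟨ht0, ht1⟩)
    nlinarith
  have hlim : Tendsto (fun t : ℝ => d * (q - 1) * t) (𝓝[>] 0) (𝓝 0) := by
    refine tendsto_nhdsWithin_of_tendsto_nhds ?_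
    exact (by fun_prop : Continuous fun t : ℝ => d * (q - 1) * t).tendsto' 0 0 (by simp)
  have := ge_of_tendsto hlim (eventually_of_mem (Ioo_mem_nhdsGT zero_lt_one) key)
  linarith

namespace Matrix

variable {n : Type*} [Fintype n] [DecidableEq n]

theorem det_add_vecMulVec {M : Matrix n n ℝ} (hM : IsUnit M.det) (u v : n → ℝ) :
    (M + vecMulVec u v).det = M.det * (1 + v ⬝ᵥ M⁻¹ *ᵥ u) := by
  rw [vecMulVec_eq Unit, det_add_replicateCol_mul_replicateRow hM, det_unique (n := Unit),
    Matrix.add_apply, one_apply_eq, Matrix.mul_assoc, ← replicateCol_mulVec,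
    replicateRow_mul_replicateCol_apply]

theorem det_smul_add_smul_vecMulVec {M : Matrix n n ℝ} (hM : IsUnit M.det) {a : ℝ} (ha : a ≠ 0)
    (b : ℝ) (u v : n → ℝ) :
    (a • M + b • vecMulVec u v).det
      = a ^ Fintype.card n * M.det * (1 + b / a * (v ⬝ᵥ M⁻¹ *ᵥ u)) := by
  have : a • M + b • vecMulVec u v = a • (M + vecMulVec ((b / a) • u) v) := by
    rw [smul_add, smul_vecMulVec, smul_smul, mul_div_cancel₀ b ha]
  rw [this, det_smul, det_add_vecMulVec hM, mulVec_smul, dotProduct_smul, smul_eq_mul, mul_assoc]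

theorem PosDef.dotProduct_inv_mulVec_le_card {M : Matrix n n ℝ} (hM : M.PosDef) (u : n → ℝ)
    (h : ∀ t ∈ Ioo (0 : ℝ) 1, ((1 - t) • M + t • vecMulVec u u).det ≤ M.det) :
    u ⬝ᵥ M⁻¹ *ᵥ u ≤ Fintype.card n := by
  have hq : 0 ≤ u ⬝ᵥ M⁻¹ *ᵥ u := by
    simpa using hM.inv.posSemidef.dotProduct_mulVec_nonneg u
  refine le_of_forall_one_sub_pow_mul_le hq fun t ht => ?_
  have h1t : 0 < 1 - t := sub_pos.mpr ht.2
  have := h t ht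
  rw [det_smul_add_smul_vecMulVec hM.det_pos.ne'.isUnit h1t.ne', mul_right_comm,
    mul_le_iff_le_one_left hM.det_pos] at this
  calc (1 - t) ^ Fintype.card n * (1 - t + t * (u ⬝ᵥ M⁻¹ *ᵥ u))
      = (1 - t) * ((1 - t) ^ Fintype.card n * (1 + t / (1 - t) * (u ⬝ᵥ M⁻¹ *ᵥ u))) := by
        field_simp
    _ ≤ 1 - t := mul_le_of_le_one_right h1t.le this

theorem PosSemidef.det_le_one_of_trace_le_card {A : Matrix n n ℝ} (hA : A.PosSemidef)
    (h : A.trace ≤ Fintype.card n) : A.det ≤ 1 := by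
  have hev := hA.eigenvalues_nonneg
  calc A.det = ∏ i, hA.1.eigenvalues i := by simp [hA.1.det_eq_prod_eigenvalues]
    _ ≤ ∏ i, Real.exp (hA.1.eigenvalues i - 1) :=
        Finset.prod_le_prod (fun i _ => hev i) fun i _ => by
          linarith [Real.add_one_le_exp (hA.1.eigenvalues i - 1)]
    _ = Real.exp (A.trace - Fintype.card n) := by
        simp [← Real.exp_sum, hA.1.trace_eq_sum_eigenvalues]
    _ ≤ 1 := Real.exp_le_one_iff.mpr (by linarith)

open scoped MatrixOrder in
theorem PosDef.det_le_det_of_trace_inv_mul_le_card {A B : Matrix n n ℝ} (hA : A.PosDef)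
    (hB : B.PosSemidef) (h : (A⁻¹ * B).trace ≤ Fintype.card n) : B.det ≤ A.det := by
  set S := CFC.sqrt A⁻¹
  have hS : S.IsHermitian := (CFC.sqrt_nonneg A⁻¹).posSemidef.1
  have hSS : S * S = A⁻¹ := CFC.sqrt_mul_sqrt_self A⁻¹ hA.inv.posSemidef.nonneg
  have hSBS : (S * B * S).PosSemidef := by
    have := hB.mul_mul_conjTranspose_same S
    rwa [hS.eq] at this
  have hdet : (S * B * S).det * A.det = B.det :=
    calc (S * B * S).det * A.det = B.det * ((S * S) * A).det := by simp only [det_mul]; ring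
      _ = B.det := by rw [hSS, nonsing_inv_mul _ hA.det_pos.ne'.isUnit, det_one, mul_one]
  have := hSBS.det_le_one_of_trace_le_card (by rwa [trace_mul_cycle, hSS])
  rw [← hdet]
  exact mul_le_of_le_one_left hA.det_pos.le this

end Matrix

section Design

variable {d k : ℕ} (φ : Fin k → Fin d → ℝ)

def IsDOptimal (π : Fin k → ℝ) : Prop :=
  ∀ π', IsDesign π' → (infoMatrix φ π').det ≤ (infoMatrix φ π).det

noncomputable def predictionVariance (π : Fin k → ℝ) (i : Fin k) : ℝ :=
  φ i ⬝ᵥ (infoMatrix φ π)⁻¹ *ᵥ φ i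

variable {φ} {π : Fin k → ℝ}

theorem IsDesign.nonempty (hπ : IsDesign π) : Nonempty (Fin k) := by
  by_contra h
  simpa [not_nonempty_iff.mp h] using hπ.2

theorem IsDesign.sum_mul_le (hπ : IsDesign π) {f : Fin k → ℝ} {c : ℝ} (hf : ∀ i, f i ≤ c) :
    ∑ i, π i * f i ≤ c :=
  calc ∑ i, π i * f i ≤ ∑ i, π i * c :=
        Finset.sum_le_sum fun i _ => mul_le_mul_of_nonneg_left (hf i) (hπ.1 i)
    _ = c := by rw [← Finset.sum_mul, hπ.2, one_mul]

theorem IsDesign.sum_mul_le_iSup (hπ : IsDesign π) (f : Fin k → ℝ) :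
    ∑ i, π i * f i ≤ ⨆ i, f i :=
  hπ.sum_mul_le fun i => le_ciSup (Finite.bddAbove_range f) i

theorem infoMatrix_posSemidef (φ : Fin k → Fin d → ℝ) (hπ : ∀ i, 0 ≤ π i) :
    (infoMatrix φ π).PosSemidef :=
  posSemidef_sum _ fun i _ => (posSemidef_vecMulVec_self_star (φ i)).smul (hπ i)

theorem trace_mul_infoMatrix (A : Matrix (Fin d) (Fin d) ℝ) :
    (A * infoMatrix φ π).trace = ∑ i, π i * (φ i ⬝ᵥ A *ᵥ φ i) := by
  simp [infoMatrix, Matrix.mul_sum, trace_sum, mul_vecMulVec, dotProduct_comm]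

theorem sum_mul_predictionVariance (hM : IsUnit (infoMatrix φ π)) :
    ∑ i, π i * predictionVariance φ π i = d := by
  unfold predictionVariance
  rw [← trace_mul_infoMatrix, nonsing_inv_mul _ ((isUnit_iff_isUnit_det _).mp hM)]
  simp

theorem infoMatrix_lineMap_single (t : ℝ) (j : Fin k) :
    infoMatrix φ ((1 - t) • π + t • Pi.single j 1)
      = (1 - t) • infoMatrix φ π + t • vecMulVec (φ j) (φ j) := by
  simp [infoMatrix, add_smul, Finset.sum_add_distrib, Finset.smul_sum, smul_smul, Pi.single_apply]

theorem IsDesign.exists_isDOptimal (hπ : IsDesign π) (φ : Fin k → Fin d → ℝ) :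
    ∃ π₀, IsDesign π₀ ∧ IsDOptimal φ π₀ := by
  obtain ⟨π₀, hπ₀, hmax⟩ := (isCompact_stdSimplex ℝ (Fin k)).exists_isMaxOn ⟨π, hπ⟩
    (by unfold infoMatrix; fun_prop : Continuous fun π => (infoMatrix φ π).det).continuousOn
  exact ⟨π₀, hπ₀, fun π' hπ' => hmax hπ'⟩

theorem IsDOptimal.predictionVariance_le (hopt : IsDOptimal φ π) (hπ : IsDesign π)
    (hM : IsUnit (infoMatrix φ π)) (j : Fin k) : predictionVariance φ π j ≤ d := by
  have hPD := (infoMatrix_posSemidef φ hπ.1).posDef_iff_isUnit.mpr hM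
  simpa [predictionVariance] using hPD.dotProduct_inv_mulVec_le_card (φ j) fun t ht => by
    rw [← infoMatrix_lineMap_single]
    exact hopt _ (convex_stdSimplex ℝ (Fin k) hπ (single_mem_stdSimplex ℝ j)
      (sub_nonneg.mpr ht.2.le) ht.1.le (sub_add_cancel 1 t))

theorem le_iSup_predictionVariance (hπ : IsDesign π) (hM : IsUnit (infoMatrix φ π)) :
    (d : ℝ) ≤ ⨆ i, predictionVariance φ π i :=
  sum_mul_predictionVariance hM ▸ hπ.sum_mul_le_iSup _

end Design

theorem kiefer_wolfowitz_equivalence_general {d k : ℕ}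
    (φ : Fin k → (Fin d → ℝ))
    (πs : Fin k → ℝ) (hπs : IsDesign πs) (hinv : IsUnit (infoMatrix φ πs)) :
    (∀ π, IsDesign π → (infoMatrix φ π).det ≤ (infoMatrix φ πs).det) ↔
      (∀ π, IsDesign π → IsUnit (infoMatrix φ π) →
        (⨆ i, φ i ⬝ᵥ (infoMatrix φ πs)⁻¹ *ᵥ φ i) ≤
          ⨆ i, φ i ⬝ᵥ (infoMatrix φ π)⁻¹ *ᵥ φ i) := by
  have := hπs.nonempty
  have hMs := (infoMatrix_posSemidef φ hπs.1).posDef_iff_isUnit.mpr hinv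
  constructor
  · intro hopt π hπ hM
    exact ciSup_le fun j => (IsDOptimal.predictionVariance_le hopt hπs hinv j).trans
      (le_iSup_predictionVariance hπ hM)
  · intro hG π hπ
    obtain ⟨π₀, hπ₀, hopt₀⟩ := hπs.exists_isDOptimal φ
    have hM₀ : IsUnit (infoMatrix φ π₀) :=
      (isUnit_iff_isUnit_det _).mpr (hMs.det_pos.trans_le (hopt₀ πs hπs)).ne'.isUnit
    have hvar (i : Fin k) : predictionVariance φ πs i ≤ d :=
      (le_ciSup (Finite.bddAbove_range _) i).trans
        ((hG π₀ hπ₀ hM₀).trans (ciSup_le (hopt₀.predictionVariance_le hπ₀ hM₀)))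
    refine hMs.det_le_det_of_trace_inv_mul_le_card (infoMatrix_posSemidef φ hπ.1) ?_
    rw [trace_mul_infoMatrix, Fintype.card_fin]
    exact hπ.sum_mul_le hvar

theorem kiefer_wolfowitz_equivalence {d k : ℕ} (hd : 0 < d) (hk : 0 < k)
    (φ : Fin k → (Fin d → ℝ))
    (hspan : Submodule.span ℝ (Set.range φ) = ⊤)
    (πs : Fin k → ℝ) (hπs : IsDesign πs) (hinv : IsUnit (infoMatrix φ πs)) :
    (∀ π, IsDesign π → (infoMatrix φ π).det ≤ (infoMatrix φ πs).det) ↔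
      (∀ π, IsDesign π → IsUnit (infoMatrix φ π) →
        (⨆ i, φ i ⬝ᵥ (infoMatrix φ πs)⁻¹ *ᵥ φ i) ≤
          ⨆ i, φ i ⬝ᵥ (infoMatrix φ π)⁻¹ *ᵥ φ i) :=
  kiefer_wolfowitz_equivalence_general φ πs hπs hinv
end

section
/- Uniqueness of the optimal information matrix: if π and π' are both D-optimal designs (each maximizing det M(·) over all designs, with invertible information matrices), then M(π) = M(π'). -/
open Matrix BigOperators

/-!
The midpoint `ρ = (π + π') / 2` is again a design and `M(ρ) = (M(π) + M(π')) / 2`, so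
optimality of both designs gives `det M(ρ) ^ 2 ≤ det M(π) * det M(π')`. Writing
`M(π) = Sᴴ S` and `M(π') = Sᴴ C S`, this becomes `det ((1 + C) / 2) ^ 2 ≤ det C`, i.e.
`∏ ((1 + μᵢ) / 2) ^ 2 ≤ ∏ μᵢ` over the eigenvalues `μᵢ > 0` of `C`. Termwise AM-GM is the
reverse inequality, strict unless `μᵢ = 1`; hence all `μᵢ = 1`, `C = 1` and `M(π) = M(π')`.
-/

namespace Matrix

variable {n : Type*} [Fintype n] [DecidableEq n]

theorem det_conjTranspose_mul_mul_self {R : Type*} [CommRing R] [StarRing R] [TrivialStar R]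
    (S X : Matrix n n R) : det (Sᴴ * X * S) = det S ^ 2 * det X := by
  rw [det_mul, det_mul, det_conjTranspose, star_trivial]
  ring

theorem IsHermitian.det_cfc {𝕜 : Type*} [RCLike 𝕜] {A : Matrix n n 𝕜} (hA : A.IsHermitian)
    (f : ℝ → ℝ) : det (cfc f A) = ∏ i, (f (hA.eigenvalues i) : 𝕜) := by
  rw [hA.cfc_eq]
  simp [IsHermitian.cfc, -Unitary.conjStarAlgAut_apply]

theorem IsHermitian.eq_one_of_eigenvalues_eq_one {𝕜 : Type*} [RCLike 𝕜] {A : Matrix n n 𝕜}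
    (hA : A.IsHermitian) (h : ∀ i, hA.eigenvalues i = 1) : A = 1 :=
  calc A = cfc id A := (cfc_id ℝ A).symm
    _ = cfc (fun _ => 1) A := cfc_congr fun x hx => by
        rw [hA.spectrum_real_eq_range_eigenvalues] at hx
        obtain ⟨i, rfl⟩ := hx
        exact h i
    _ = 1 := cfc_const_one ℝ A

open scoped MatrixOrder Matrix.Norms.L2Operator in
theorem PosDef.exists_isUnit_eq_conjTranspose_mul_self {A : Matrix n n ℝ} (hA : A.PosDef) :
    ∃ S : Matrix n n ℝ, IsUnit S ∧ A = Sᴴ * S :=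
  CStarAlgebra.isStrictlyPositive_iff_eq_star_mul_self.mp hA.isStrictlyPositive

theorem PosDef.eq_one_of_sq_det_half_one_add_le {C : Matrix n n ℝ} (hC : C.PosDef)
    (h : det ((2 : ℝ)⁻¹ • (1 + C)) ^ 2 ≤ det C) : C = 1 := by
  set μ := hC.isHermitian.eigenvalues
  have hcfc : (2 : ℝ)⁻¹ • (1 + C) = cfc (fun x : ℝ => 2⁻¹ * (1 + x)) C := by
    have : IsSelfAdjoint C := hC.isHermitian -- side condition of the `cfc` lemmas
    rw [cfc_const_mul .., cfc_const_add .., cfc_id' ℝ C, map_one]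
  have hprod : ∏ i, (2⁻¹ * (1 + μ i)) ^ 2 ≤ ∏ i, μ i := by
    rw [hcfc, hC.isHermitian.det_cfc] at h
    simpa [Finset.prod_pow, hC.isHermitian.det_eq_prod_eigenvalues] using h
  refine hC.isHermitian.eq_one_of_eigenvalues_eq_one fun j => ?_
  by_contra hj
  -- AM-GM: `x ≤ ((1 + x) / 2) ^ 2`, strictly unless `x = 1`
  have hlt : ∏ i, μ i < ∏ i, (2⁻¹ * (1 + μ i)) ^ 2 := by
    refine Finset.prod_lt_prod (fun i _ => hC.eigenvalues_pos i)
      (fun i _ => by nlinarith [sq_nonneg (1 - μ i)]) ⟨j, Finset.mem_univ j, ?_⟩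
    nlinarith [sq_pos_of_ne_zero (sub_ne_zero.mpr hj)]
  exact hlt.not_ge hprod

theorem PosDef.eq_of_sq_det_midpoint_le {A B : Matrix n n ℝ} (hA : A.PosDef) (hB : B.PosDef)
    (h : det ((2 : ℝ)⁻¹ • (A + B)) ^ 2 ≤ det A * det B) : A = B := by
  obtain ⟨S, hS, rfl⟩ := hA.exists_isUnit_eq_conjTranspose_mul_self
  have hdetS : IsUnit (det S) := (isUnit_iff_isUnit_det S).mp hS
  set C := (S⁻¹)ᴴ * B * S⁻¹
  have hBC : B = Sᴴ * C * S := by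
    simp only [C, Matrix.mul_assoc]
    rw [nonsing_inv_mul S hdetS, mul_one, ← Matrix.mul_assoc, ← conjTranspose_mul,
      nonsing_inv_mul S hdetS, conjTranspose_one, one_mul]
  have hC : C.PosDef :=
    hB.conjTranspose_mul_mul_same (mulVec_injective_iff_isUnit.mpr (isUnit_nonsing_inv_iff.mpr hS))
  have hmid : (2 : ℝ)⁻¹ • (Sᴴ * S + B) = Sᴴ * ((2 : ℝ)⁻¹ • (1 + C)) * S := by
    rw [hBC, Matrix.mul_smul, Matrix.smul_mul, Matrix.mul_add, Matrix.add_mul, Matrix.mul_one]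
  have hdetSS : det (Sᴴ * S) = det S ^ 2 := by
    simpa using det_conjTranspose_mul_mul_self S 1
  rw [hBC, hC.eq_one_of_sq_det_half_one_add_le ?_, Matrix.mul_one]
  rw [hmid, hBC, hdetSS, det_conjTranspose_mul_mul_self, det_conjTranspose_mul_mul_self] at h
  refine le_of_mul_le_mul_left ?_ (pow_pos (sq_pos_of_ne_zero hdetS.ne_zero) 2)
  linear_combination h

end Matrix

section InfoMatrix

variable {d k : ℕ} (φ : Fin k → (Fin d → ℝ))

theorem convex_setOf_isDesign : Convex ℝ {π : Fin k → ℝ | IsDesign π} :=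
  convex_stdSimplex ℝ (Fin k)

theorem infoMatrix_add (π π' : Fin k → ℝ) :
    infoMatrix φ (π + π') = infoMatrix φ π + infoMatrix φ π' := by
  simp [infoMatrix, add_smul, Finset.sum_add_distrib]

theorem infoMatrix_smul (c : ℝ) (π : Fin k → ℝ) : infoMatrix φ (c • π) = c • infoMatrix φ π := by
  simp [infoMatrix, Finset.smul_sum, smul_smul]

theorem posSemidef_infoMatrix {π : Fin k → ℝ} (hπ : ∀ i, 0 ≤ π i) :
    (infoMatrix φ π).PosSemidef :=
  posSemidef_sum _ fun i _ => by
    simpa using (posSemidef_vecMulVec_self_star (φ i)).smul (hπ i)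

theorem posDef_infoMatrix {π : Fin k → ℝ} (hπ : IsDesign π) (hinv : IsUnit (infoMatrix φ π)) :
    (infoMatrix φ π).PosDef :=
  (posSemidef_infoMatrix φ hπ.1).posDef_iff_isUnit.mpr hinv

end InfoMatrix

theorem D_optimal_infoMatrix_unique_general {d k : ℕ}
    (φ : Fin k → (Fin d → ℝ))
    (π π' : Fin k → ℝ) (hπ : IsDesign π) (hπ' : IsDesign π')
    (hinv : IsUnit (infoMatrix φ π)) (hinv' : IsUnit (infoMatrix φ π'))
    (hopt : ∀ ρ, IsDesign ρ → (infoMatrix φ ρ).det ≤ (infoMatrix φ π).det)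
    (hopt' : ∀ ρ, IsDesign ρ → (infoMatrix φ ρ).det ≤ (infoMatrix φ π').det) :
    infoMatrix φ π = infoMatrix φ π' := by
  set ρ := (2 : ℝ)⁻¹ • π + (2 : ℝ)⁻¹ • π'
  have hρ : IsDesign ρ :=
    convex_setOf_isDesign hπ hπ' (by norm_num) (by norm_num) (by norm_num)
  have hmid : infoMatrix φ ρ = (2 : ℝ)⁻¹ • (infoMatrix φ π + infoMatrix φ π') := by
    rw [infoMatrix_add, infoMatrix_smul, infoMatrix_smul, smul_add]
  have hρ_nonneg : 0 ≤ (infoMatrix φ ρ).det := (posSemidef_infoMatrix φ hρ.1).det_nonneg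
  refine (posDef_infoMatrix φ hπ hinv).eq_of_sq_det_midpoint_le (posDef_infoMatrix φ hπ' hinv') ?_
  rw [← hmid, sq]
  exact mul_le_mul (hopt ρ hρ) (hopt' ρ hρ) hρ_nonneg (hρ_nonneg.trans (hopt ρ hρ))

theorem D_optimal_infoMatrix_unique {d k : ℕ} (hd : 0 < d) (hk : 0 < k)
    (φ : Fin k → (Fin d → ℝ))
    (hspan : Submodule.span ℝ (Set.range φ) = ⊤)
    (π π' : Fin k → ℝ) (hπ : IsDesign π) (hπ' : IsDesign π')
    (hinv : IsUnit (infoMatrix φ π)) (hinv' : IsUnit (infoMatrix φ π'))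
    (hopt : ∀ ρ, IsDesign ρ → (infoMatrix φ ρ).det ≤ (infoMatrix φ π).det)
    (hopt' : ∀ ρ, IsDesign ρ → (infoMatrix φ ρ).det ≤ (infoMatrix φ π').det) :
    infoMatrix φ π = infoMatrix φ π' :=
  D_optimal_infoMatrix_unique_general φ π π' hπ hπ' hinv hinv' hopt hopt'
end
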